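/- arXiv:1810.11456 — 2 statements merged into one kernel-verified Lean document; each statement's English description precedes it below -/
import Mathlib

section
/- Let p be an odd prime, a ≥ 1, and k, h positive integers with gcd(p, kh) = 1. Suppose the least positive integer m with p^a ∣ k^m - h^m is even. Then p^a divides k^{m/2} + h^{m/2}, and m/2 is the least positive integer u with p^a ∣ k^u + h^u. -/
theorem stmt_11 (p a k h m : ℕ) (hp : p.Prime) (hodd : Odd p) (ha : 1 ≤ a)
    (hk : 0 < k) (hh : 0 < h) (hcop : Nat.gcd p (k * h) = 1)
    (hm : IsLeast {m : ℕ | 0 < m ∧ ((p : ℤ)) ^ a ∣ (k : ℤ) ^ m - (h : ℤ) ^ m} m)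
    (heven : Even m) :
    IsLeast {u : ℕ | 0 < u ∧ ((p : ℤ)) ^ a ∣ (k : ℤ) ^ u + (h : ℤ) ^ u} (m / 2) := by
  obtain ⟨⟨hm0, hmd⟩, hmin⟩ := hm
  obtain ⟨n, hn⟩ := heven
  have hpz : Prime (p : ℤ) := (Nat.prime_iff_prime_int.mp hp)
  have hnpos : 0 < n := by omega
  have hpk : ¬ (p:ℤ) ∣ (k:ℤ) := by
    intro hd
    have h1 : p ∣ k := Int.ofNat_dvd.mp hd
    have h2 : p ∣ k * h := h1.mul_right h
    have := Nat.Coprime.eq_one_of_dvd hcop h2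
    exact hp.one_lt.ne' this
  have hmd' := hmd
  have hfac : (k:ℤ)^m - (h:ℤ)^m = ((k:ℤ)^n - (h:ℤ)^n) * ((k:ℤ)^n + (h:ℤ)^n) := by
    rw [hn, pow_add, pow_add]; ring
  have hps : ¬ (p:ℤ) ∣ ((k:ℤ)^n - (h:ℤ)^n) := by
    intro hd
    have hnots : ¬ (p:ℤ) ∣ ((k:ℤ)^n + (h:ℤ)^n) := by
      intro hs
      have h2k : (p:ℤ) ∣ 2 * (k:ℤ)^n := by
        have := dvd_add hd hs
        have he : ((k:ℤ)^n - (h:ℤ)^n) + ((k:ℤ)^n + (h:ℤ)^n) = 2 * (k:ℤ)^n := by ring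
        rwa [he] at this
      rcases hpz.dvd_mul.mp h2k with h2 | hkn
      · have := Int.le_of_dvd (by norm_num) h2
        have : p ≤ 2 := by exact_mod_cast this
        obtain ⟨c, hc⟩ := hodd
        interval_cases p <;> omega
      · exact hpk (hpz.dvd_of_dvd_pow hkn)
    have hpa : (p:ℤ)^a ∣ ((k:ℤ)^n - (h:ℤ)^n) :=
      hpz.pow_dvd_of_dvd_mul_right a hnots (by rw [← hfac]; exact hmd')
    have := hmin ⟨hnpos, hpa⟩
    omega
  have hsum : (p:ℤ)^a ∣ ((k:ℤ)^n + (h:ℤ)^n) :=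
    hpz.pow_dvd_of_dvd_mul_left a hps (by rw [← hfac]; exact hmd')
  constructor
  · have : m / 2 = n := by omega
    rw [this]
    exact ⟨hnpos, hsum⟩
  · rintro u ⟨hu0, hud⟩
    have hdv : (p:ℤ)^a ∣ (k:ℤ)^(u+u) - (h:ℤ)^(u+u) := by
      have he : (k:ℤ)^(u+u) - (h:ℤ)^(u+u) = ((k:ℤ)^u - (h:ℤ)^u) * ((k:ℤ)^u + (h:ℤ)^u) := by
        rw [pow_add, pow_add]; ring
      rw [he]
      exact hud.mul_left _
    have := hmin ⟨by omega, hdv⟩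
    omega
end

section
/- Let k, h be coprime positive integers with k > h, and let n > 1 be a positive integer. Then a prime p is a primitive prime divisor of k^n + h^n (i.e., p ∣ k^n + h^n and p ∤ k^m + h^m for all 1 ≤ m < n) if and only if p is a primitive prime divisor of k^{2n} - h^{2n} (i.e., p ∣ k^{2n} - h^{2n} and p ∤ k^m - h^m for all 1 ≤ m < 2n). -/
lemma zmod2_ne_zero : ∀ y : ZMod 2, y ≠ 0 → y = 1 := by decide

lemma zmod2_neg_one : (-1 : ZMod 2) = 1 := by decide

theorem helper_19 {p : ℕ} [Fact p.Prime] {n : ℕ} (hn : 1 < n) {x : ZMod p} (hx : x ≠ 0) :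
    (x ^ n = -1 ∧ ∀ m : ℕ, 1 ≤ m → m < n → x ^ m ≠ -1) ↔
    (x ^ (2 * n) = 1 ∧ ∀ m : ℕ, 1 ≤ m → m < 2 * n → x ^ m ≠ 1) := by
  by_cases h2 : (-1 : ZMod p) = 1
  · -- characteristic 2 case: p = 2, x = 1, both sides are false
    have hp2 : p = 2 := by
      have h20 : ((2 : ℕ) : ZMod p) = 0 := by push_cast; linear_combination -h2
      have hdvd : p ∣ 2 := (ZMod.natCast_eq_zero_iff 2 p).mp h20
      have := Nat.le_of_dvd (by norm_num) hdvd
      have := (Fact.out : p.Prime).two_le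
      omega
    subst hp2
    have hx1 : x = 1 := zmod2_ne_zero x hx
    have hm1 : (-1 : ZMod 2) = 1 := zmod2_neg_one
    constructor
    · rintro ⟨-, hpr⟩
      exact absurd (by rw [pow_one, hx1, hm1]) (hpr 1 le_rfl (by omega))
    · rintro ⟨-, hpr⟩
      exact absurd (by rw [pow_one, hx1]) (hpr 1 le_rfl (by omega))
  · constructor
    · rintro ⟨h1, hpr⟩
      have hx2n : x ^ (2 * n) = 1 := by
        rw [two_mul, pow_add, h1]; ring
      refine ⟨hx2n, ?_⟩
      intro m hm1 hm2 hxm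
      set d := orderOf x with hd
      have hd2n : d ∣ 2 * n := orderOf_dvd_of_pow_eq_one hx2n
      have hdm : d ∣ m := orderOf_dvd_of_pow_eq_one hxm
      have hdpos : 0 < d := by
        rcases Nat.eq_zero_or_pos d with h0 | h0
        · rw [h0] at hdm; omega
        · exact h0
      have hdn : ¬ d ∣ n := by
        intro hdvd
        have hxn1 : x ^ n = 1 := orderOf_dvd_iff_pow_eq_one.mp hdvd
        rw [h1] at hxn1
        exact h2 hxn1
      have hdeven : 2 ∣ d := by
        rcases Nat.even_or_odd d with he | ho
        · exact he.two_dvd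
        · exact absurd (ho.coprime_two_right.dvd_of_dvd_mul_left hd2n) hdn
      obtain ⟨e, he⟩ := hdeven
      have hepos : 0 < e := by omega
      have hsq : (x ^ e) ^ 2 = 1 := by
        rw [← pow_mul, show e * 2 = d by omega]
        exact pow_orderOf_eq_one x
      have hxe1 : x ^ e ≠ 1 := by
        intro hc
        have := Nat.le_of_dvd hepos (orderOf_dvd_of_pow_eq_one hc)
        omega
      have hxe : x ^ e = -1 := by
        rcases mul_eq_zero.mp (show (x ^ e - 1) * (x ^ e + 1) = 0 by linear_combination hsq) with hc | hc
        · exact absurd (sub_eq_zero.mp hc) hxe1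
        · exact eq_neg_of_add_eq_zero_left hc
      have hne : n ≤ e := by
        by_contra hlt
        exact hpr e (by omega) (by omega) hxe
      have := Nat.le_of_dvd (by omega) hdm
      omega
    · rintro ⟨h1, hpr⟩
      have h1' : x ^ n * x ^ n = 1 := by
        rw [← pow_add, ← two_mul]; exact h1
      have hxn1 : x ^ n ≠ 1 := hpr n (by omega) (by omega)
      have hxn : x ^ n = -1 := by
        rcases mul_eq_zero.mp (show (x ^ n - 1) * (x ^ n + 1) = 0 by linear_combination h1') with hc | hc
        · exact absurd (sub_eq_zero.mp hc) hxn1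
        · exact eq_neg_of_add_eq_zero_left hc
      refine ⟨hxn, ?_⟩
      intro m hm1 hm2 hxm
      have : x ^ (2 * m) = 1 := by
        rw [mul_comm, pow_mul, hxm, neg_one_sq]
      exact hpr (2 * m) (by omega) (by omega) this

lemma aux_nondvd_19 {p k h : ℕ} (hp : p.Prime) (hcop : Nat.gcd k h = 1) {N : ℕ} (hN : 0 < N)
    {c : ℤ} (hc : c = 1 ∨ c = -1) (hd : (p : ℤ) ∣ (k : ℤ) ^ N + c * (h : ℤ) ^ N) :
    ¬ p ∣ k ∧ ¬ p ∣ h := by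
  have hpk : ∀ a : ℕ, (p : ℤ) ∣ (a : ℤ) ^ N → p ∣ a := by
    intro a ha
    have : (p : ℤ) ∣ ((a ^ N : ℕ) : ℤ) := by push_cast; exact ha
    exact hp.dvd_of_dvd_pow (Int.natCast_dvd_natCast.mp this)
  have himp1 : p ∣ k → p ∣ h := by
    intro hk
    have h1 : (p : ℤ) ∣ (k : ℤ) ^ N := dvd_pow (Int.natCast_dvd_natCast.mpr hk) (by omega)
    have h2 : (p : ℤ) ∣ c * (h : ℤ) ^ N := by
      have := dvd_sub hd h1
      simpa using this
    have h3 : (p : ℤ) ∣ (h : ℤ) ^ N := by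
      rcases hc with rfl | rfl
      · simpa using h2
      · simpa using h2
    exact hpk h h3
  have himp2 : p ∣ h → p ∣ k := by
    intro hh
    have h1 : (p : ℤ) ∣ c * (h : ℤ) ^ N :=
      Dvd.dvd.mul_left (dvd_pow (Int.natCast_dvd_natCast.mpr hh) (by omega)) c
    have h3 : (p : ℤ) ∣ (k : ℤ) ^ N := by
      have := dvd_sub hd h1
      simpa using this
    exact hpk k h3
  have hnk : ¬ p ∣ k := by
    intro hk
    have : p ∣ 1 := hcop ▸ Nat.dvd_gcd hk (himp1 hk)
    have := Nat.dvd_one.mp this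
    have := hp.one_lt
    omega
  exact ⟨hnk, fun hh2 => hnk (himp2 hh2)⟩

theorem stmt_19 (k h n : ℕ) (hcop : Nat.gcd k h = 1) (hkh : h < k) (hh : 0 < h)
    (hn : 1 < n) (p : ℕ) (hp : p.Prime) :
    ((p : ℤ) ∣ (k : ℤ) ^ n + (h : ℤ) ^ n ∧
        ∀ m : ℕ, 1 ≤ m → m < n → ¬ (p : ℤ) ∣ (k : ℤ) ^ m + (h : ℤ) ^ m) ↔
      ((p : ℤ) ∣ (k : ℤ) ^ (2 * n) - (h : ℤ) ^ (2 * n) ∧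
        ∀ m : ℕ, 1 ≤ m → m < 2 * n → ¬ (p : ℤ) ∣ (k : ℤ) ^ m - (h : ℤ) ^ m) := by
  haveI : Fact p.Prime := ⟨hp⟩
  have main : ¬ p ∣ k → ¬ p ∣ h → (((p : ℤ) ∣ (k : ℤ) ^ n + (h : ℤ) ^ n ∧
        ∀ m : ℕ, 1 ≤ m → m < n → ¬ (p : ℤ) ∣ (k : ℤ) ^ m + (h : ℤ) ^ m) ↔
      ((p : ℤ) ∣ (k : ℤ) ^ (2 * n) - (h : ℤ) ^ (2 * n) ∧
        ∀ m : ℕ, 1 ≤ m → m < 2 * n → ¬ (p : ℤ) ∣ (k : ℤ) ^ m - (h : ℤ) ^ m)) := by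
    intro hk' hh'
    have hK : ((k : ℕ) : ZMod p) ≠ 0 := by
      rwa [Ne, ZMod.natCast_eq_zero_iff]
    have hH : ((h : ℕ) : ZMod p) ≠ 0 := by
      rwa [Ne, ZMod.natCast_eq_zero_iff]
    have tplus : ∀ m : ℕ, ((p : ℤ) ∣ (k : ℤ) ^ m + (h : ℤ) ^ m ↔
        ((k : ZMod p) / (h : ZMod p)) ^ m = -1) := by
      intro m
      rw [← ZMod.intCast_zmod_eq_zero_iff_dvd]
      push_cast
      rw [div_pow, div_eq_iff (pow_ne_zero m hH)]
      constructor <;> intro hq <;> linear_combination hq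
    have tminus : ∀ m : ℕ, ((p : ℤ) ∣ (k : ℤ) ^ m - (h : ℤ) ^ m ↔
        ((k : ZMod p) / (h : ZMod p)) ^ m = 1) := by
      intro m
      rw [← ZMod.intCast_zmod_eq_zero_iff_dvd]
      push_cast
      rw [div_pow, div_eq_one_iff_eq (pow_ne_zero m hH)]
      constructor <;> intro hq <;> linear_combination hq
    simp only [tplus, tminus]
    exact helper_19 hn (div_ne_zero hK hH)
  constructor
  · rintro ⟨h1, h2⟩
    have hd : (p : ℤ) ∣ (k : ℤ) ^ n + 1 * (h : ℤ) ^ n := by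
      rw [one_mul]; exact h1
    obtain ⟨hk', hh'⟩ := aux_nondvd_19 hp hcop (by omega) (Or.inl rfl) hd
    exact (main hk' hh').mp ⟨h1, h2⟩
  · rintro ⟨h1, h2⟩
    have hd : (p : ℤ) ∣ (k : ℤ) ^ (2 * n) + (-1) * (h : ℤ) ^ (2 * n) := by
      have : (k : ℤ) ^ (2 * n) + (-1) * (h : ℤ) ^ (2 * n)
          = (k : ℤ) ^ (2 * n) - (h : ℤ) ^ (2 * n) := by ring
      rw [this]; exact h1
    obtain ⟨hk', hh'⟩ := aux_nondvd_19 hp hcop (by omega) (Or.inr rfl) hd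
    exact (main hk' hh').mpr ⟨h1, h2⟩
end
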